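/- arXiv:1704.02294 — 4 statements merged into one kernel-verified Lean document; each statement's English description precedes it below -/
import Mathlib

section
/- The double integral ∫_A (1 - α²)^{-1/2} (1 - β²)^{-1/2} dα dβ over A = { (α, β) : |α| ≤ 1, |β| ≤ 1, |α - β| ≤ 1 } equals π²/2 + 2 ∫_0^1 arcsin(1 - β) / √(1 - β²) dβ. -/
/-!
Write `g x = 1 / √(1 - x²)`; with Mathlib's conventions `g` vanishes off `(-1, 1)` and is the
derivative of `arcsin` off `{-1, 1}`, so `∫ₐᵇ g = arcsin b - arcsin a` for all `a, b`. Hence the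
hexagon may be replaced by the strip `|α - β| ≤ 1`, and Fubini reduces the integral to
`∫ g(α) (arcsin (1 + α) + arcsin (1 - α)) dα`. The substitution `α ↦ -α` makes both terms equal,
and on `[-1, 0]` the factor `arcsin (1 - α)` is the constant `π / 2`, contributing `π² / 4` each.
-/

open MeasureTheory Real Set Function

/-- `√` of a negative number is `0` in Mathlib, and `1 / 0 = 0`. -/
lemma one_div_sqrt_one_sub_sq_eq_zero {x : ℝ} (hx : 1 ≤ |x|) : 1 / √(1 - x ^ 2) = 0 := by
  rw [sqrt_eq_zero'.2 (by nlinarith [sq_abs x]), div_zero]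

lemma support_one_div_sqrt_one_sub_sq :
    support (fun x : ℝ => 1 / √(1 - x ^ 2)) ⊆ Ioo (-1) 1 := by
  intro x hx
  by_contra h
  exact hx (one_div_sqrt_one_sub_sq_eq_zero (by rw [mem_Ioo, ← abs_lt] at h; exact not_lt.1 h))

lemma integrable_one_div_sqrt_one_sub_sq : Integrable (fun x : ℝ => 1 / √(1 - x ^ 2)) := by
  rw [← integrableOn_iff_integrable_of_support_subset
    (support_one_div_sqrt_one_sub_sq.trans Ioo_subset_Ioc_self)]
  exact intervalIntegral.integrableOn_deriv_of_nonneg continuous_arcsin.continuousOn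
    (fun x hx => hasDerivAt_arcsin hx.1.ne' hx.2.ne) (fun x _ => by positivity)

/-- Valid for all `a, b`: outside `[-1, 1]` the integrand vanishes and `arcsin` is constant. -/
theorem integral_one_div_sqrt_one_sub_sq (a b : ℝ) :
    ∫ x in a..b, 1 / √(1 - x ^ 2) = arcsin b - arcsin a :=
  integral_eq_of_hasDerivAt_off_countable _ _ ((countable_singleton 1).insert (-1))
    continuous_arcsin.continuousOn
    (fun x hx => by
      simp only [mem_sdiff, mem_insert_iff, mem_singleton_iff, not_or] at hx
      exact hasDerivAt_arcsin hx.2.1 hx.2.2)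
    integrable_one_div_sqrt_one_sub_sq.intervalIntegrable

lemma integral_strip_mul {f g : ℝ → ℝ} (hf : Integrable f) (hg : Integrable g) {c : ℝ}
    (hc : 0 ≤ c) :
    ∫ p in {p : ℝ × ℝ | |p.1 - p.2| ≤ c}, f p.1 * g p.2 = ∫ x, f x * ∫ y in x - c..x + c, g y := by
  have hstrip : MeasurableSet {p : ℝ × ℝ | |p.1 - p.2| ≤ c} :=
    measurableSet_le (by fun_prop) measurable_const
  have hfg : Integrable (fun p : ℝ × ℝ => f p.1 * g p.2) (volume.prod volume) :=
    hf.mul_prod hg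
  rw [← integral_indicator hstrip, Measure.volume_eq_prod, integral_prod _ (hfg.indicator hstrip)]
  congr 1 with x
  have hslice : (fun y => {p : ℝ × ℝ | |p.1 - p.2| ≤ c}.indicator (fun p => f p.1 * g p.2) (x, y))
      = (Icc (x - c) (x + c)).indicator (fun y => f x * g y) := by
    ext y
    have : |x - y| ≤ c ↔ x - c ≤ y ∧ y ≤ x + c := by
      rw [abs_le]; constructor <;> rintro ⟨h₁, h₂⟩ <;> constructor <;> linarith
    simp only [indicator, mem_ofPred_eq, mem_Icc, this]
  rw [hslice, integral_indicator measurableSet_Icc, integral_const_mul, integral_Icc_eq_integral_Ioc,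
    ← intervalIntegral.integral_of_le (by linarith)]

lemma integrable_arcsin_comp_mul (φ : ℝ → ℝ) (hφ : Continuous φ) :
    Integrable (fun x => arcsin (φ x) * (1 / √(1 - x ^ 2))) :=
  integrable_one_div_sqrt_one_sub_sq.bdd_mul (c := π / 2)
    (continuous_arcsin.comp hφ).aestronglyMeasurable
    (Filter.Eventually.of_forall fun x => by
      rw [norm_eq_abs, abs_le]
      exact ⟨neg_pi_div_two_le_arcsin _, arcsin_le_pi_div_two _⟩)

lemma integral_arcsin_one_add_mul :
    ∫ x in (-1 : ℝ)..1, arcsin (1 + x) * (1 / √(1 - x ^ 2))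
      = ∫ x in (-1 : ℝ)..1, arcsin (1 - x) * (1 / √(1 - x ^ 2)) := by
  have h := intervalIntegral.integral_comp_neg (a := -1) (b := 1)
    (fun x : ℝ => arcsin (1 - x) * (1 / √(1 - x ^ 2)))
  simp only [sub_neg_eq_add, neg_sq, neg_neg] at h
  exact h

lemma integral_neg_one_zero_arcsin_one_sub_mul :
    ∫ x in (-1 : ℝ)..0, arcsin (1 - x) * (1 / √(1 - x ^ 2)) = π ^ 2 / 4 := by
  have hconst : EqOn (fun x : ℝ => arcsin (1 - x) * (1 / √(1 - x ^ 2)))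
      (fun x => π / 2 * (1 / √(1 - x ^ 2))) (uIcc (-1) 0) := by
    intro x hx
    rw [uIcc_of_le (by norm_num)] at hx
    simp only [arcsin_of_one_le (by linarith [hx.2] : 1 ≤ 1 - x)]
  rw [intervalIntegral.integral_congr hconst, intervalIntegral.integral_const_mul,
    integral_one_div_sqrt_one_sub_sq, arcsin_zero, arcsin_neg_one]
  ring

lemma integral_mul_arcsin_add_one_sub_arcsin_sub_one :
    ∫ x, 1 / √(1 - x ^ 2) * (arcsin (x + 1) - arcsin (x - 1))
      = π ^ 2 / 2 + 2 * ∫ β in (0 : ℝ)..1, arcsin (1 - β) / √(1 - β ^ 2) := by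
  have hodd : ∀ x : ℝ, 1 / √(1 - x ^ 2) * (arcsin (x + 1) - arcsin (x - 1))
      = arcsin (1 + x) * (1 / √(1 - x ^ 2)) + arcsin (1 - x) * (1 / √(1 - x ^ 2)) := by
    intro x
    rw [show x - 1 = -(1 - x) by ring, arcsin_neg, add_comm x 1]
    ring
  have hsupp : ∀ φ : ℝ → ℝ,
      ∫ x in (-1 : ℝ)..1, arcsin (φ x) * (1 / √(1 - x ^ 2))
        = ∫ x, arcsin (φ x) * (1 / √(1 - x ^ 2)) := fun φ =>
    intervalIntegral.integral_eq_integral_of_support_subset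
      ((support_mul_subset_right _ _).trans
        (support_one_div_sqrt_one_sub_sq.trans Ioo_subset_Ioc_self))
  have hint := integrable_arcsin_comp_mul (fun x => 1 - x) (by fun_prop)
  simp only [hodd]
  rw [integral_add (integrable_arcsin_comp_mul _ (by fun_prop)) hint,
    ← hsupp, ← hsupp, integral_arcsin_one_add_mul, ← intervalIntegral.integral_add_adjacent_intervals
      (b := 0) hint.intervalIntegrable hint.intervalIntegrable,
    integral_neg_one_zero_arcsin_one_sub_mul]
  simp only [← div_eq_mul_one_div]
  ring

/-- The value of the double integral over the hexagonal region `A`. -/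
theorem hexagon_integral_value :
    (∫ p in {p : ℝ × ℝ | |p.1| ≤ 1 ∧ |p.2| ≤ 1 ∧ |p.1 - p.2| ≤ 1},
        1 / (Real.sqrt (1 - p.1 ^ 2) * Real.sqrt (1 - p.2 ^ 2)))
      = Real.pi ^ 2 / 2
        + 2 * ∫ β in (0 : ℝ)..1, Real.arcsin (1 - β) / Real.sqrt (1 - β ^ 2) := by
  simp only [← one_div_mul_one_div]
  rw [← setIntegral_eq_of_subset_of_forall_sdiff_eq_zero
      (t := {p : ℝ × ℝ | |p.1 - p.2| ≤ 1}) (measurableSet_le (by fun_prop) measurable_const)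
      (fun p hp => hp.2.2),
    integral_strip_mul integrable_one_div_sqrt_one_sub_sq integrable_one_div_sqrt_one_sub_sq zero_le_one]
  · simp only [integral_one_div_sqrt_one_sub_sq]
    exact integral_mul_arcsin_add_one_sub_arcsin_sub_one
  · rintro p ⟨hstrip, hp⟩
    simp only [mem_ofPred_eq, not_and_or, not_le] at hstrip hp
    rcases hp with h | h | h
    · rw [one_div_sqrt_one_sub_sq_eq_zero h.le, zero_mul]
    · rw [one_div_sqrt_one_sub_sq_eq_zero h.le, mul_zero]
    · exact absurd hstrip h.not_ge
end

section
/- For N ≥ 3 and integer q with N/4 < q < N/2, the q-twisted state θ_i = 2πqi/N on the cycle graph with unit weights is an unstable steady state of the Kuramoto model; specifically, cos(2πq/N) < 0, so the linearization around θ, given by the weighted graph Laplacian with edge weights cos(θ_e) = cos(2πq/N), has a negative eigenvalue. -/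
/-!
Since `π/2 < 2πq/N < π`, the common edge weight `c = cos(2πq/N)` is negative, and `L` is `c`
times the unweighted Laplacian of the cycle. The discrete Fourier mode `j ↦ cos(2πj/N)` is an
eigenvector of the latter with eigenvalue `2 - 2cos(2π/N) > 0`, so it is an eigenvector of `L`
with the negative eigenvalue `c (2 - 2cos(2π/N))`.
-/
open Real Matrix

theorem cos_two_pi_mul_div_neg {N : ℕ} {q : ℝ} (hq1 : (N : ℝ) / 4 < q) (hq2 : q < N / 2) :
    cos (2 * π * q / N) < 0 := by
  have hN : (0 : ℝ) < N := by linarith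
  apply cos_neg_of_pi_div_two_lt_of_lt
  · rw [lt_div_iff₀ hN]; nlinarith [pi_pos]
  · rw [div_lt_iff₀ hN]; nlinarith [pi_pos]

theorem cos_two_pi_div_lt_one {N : ℕ} (hN : 2 ≤ N) : cos (2 * π / N) < 1 := by
  have hN' : (2 : ℝ) ≤ N := by exact_mod_cast hN
  rw [← cos_zero]
  apply cos_lt_cos_of_nonneg_of_le_pi le_rfl
  · rw [div_le_iff₀ (by linarith)]; nlinarith [pi_pos]
  · positivity

theorem cos_two_pi_mul_natCast_mod_div (N : ℕ) (k : ℤ) (n : ℕ) :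
    cos (2 * π * k * ((n % N : ℕ) : ℝ) / N) = cos (2 * π * k * n / N) := by
  rcases Nat.eq_zero_or_pos N with rfl | hN
  · simp
  have hn : (n : ℝ) = ((n % N : ℕ) : ℝ) + N * ((n / N : ℕ) : ℝ) := by
    exact_mod_cast (Nat.mod_add_div n N).symm
  have : 2 * π * k * n / N =
      2 * π * k * ((n % N : ℕ) : ℝ) / N + (k * (n / N : ℕ) : ℤ) * (2 * π) := by
    rw [hn, Int.cast_mul, Int.cast_natCast]; field_simp
  rw [this, cos_add_int_mul_two_pi]

def cycleLaplacian (N : ℕ) : Matrix (Fin N) (Fin N) ℝ := fun i j =>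
  if i = j then 2
  else if (i.val + 1) % N = j.val ∨ (j.val + 1) % N = i.val then -1
  else 0

section
variable {N : ℕ} [NeZero N]

theorem Fin.val_add_one_mod_eq_iff (i j : Fin N) : (i.val + 1) % N = j.val ↔ j = i + 1 := by
  rw [Fin.ext_iff, Fin.val_add, Fin.val_one', Nat.add_mod_mod, eq_comm]

theorem cycleLaplacian_apply (i j : Fin N) :
    cycleLaplacian N i j = if i = j then 2 else if j = i + 1 ∨ j = i - 1 then -1 else 0 := by
  simp only [cycleLaplacian, Fin.val_add_one_mod_eq_iff, eq_sub_iff_add_eq, eq_comm (a := i)]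

theorem cycleLaplacian_mulVec_apply (hN : 3 ≤ N) (x : Fin N → ℝ) (i : Fin N) :
    (cycleLaplacian N *ᵥ x) i = 2 * x i - x (i + 1) - x (i - 1) := by
  have h1 : (1 : Fin N) ≠ 0 := by
    rw [Ne, Fin.ext_iff, Fin.val_one', Fin.val_zero, Nat.mod_eq_of_lt (by omega)]; omega
  have h2 : (1 + 1 : Fin N) ≠ 0 := by
    rw [Ne, Fin.ext_iff]
    simp [Fin.val_add, Nat.mod_eq_of_lt (show 1 < N by omega),
      Nat.mod_eq_of_lt (show 2 < N by omega)]
  have hsucc : i + 1 ≠ i := by simpa using h1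
  have hpred : i - 1 ≠ i := by simpa [sub_eq_self] using h1
  have hsp : i + 1 ≠ i - 1 := fun h => h2 (by simpa [add_assoc] using congrArg (· - i + 1) h)
  have row : ∀ j, cycleLaplacian N i j * x j = (if j = i then 2 * x j else 0) -
      (if j = i + 1 then x j else 0) - (if j = i - 1 then x j else 0) := by
    intro j
    rw [cycleLaplacian_apply]
    by_cases hi : j = i
    · subst hi; simp [hsucc.symm, hpred.symm]
    by_cases hs : j = i + 1
    · subst hs; simp [hsucc, hsp, hsucc.symm]
    by_cases hp : j = i - 1
    · subst hp; simp [hpred, hsp.symm, hpred.symm]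
    simp [hi, hs, hp, Ne.symm hi]
  simp only [mulVec, dotProduct, row, Finset.sum_sub_distrib, Finset.sum_ite_eq',
    Finset.mem_univ, if_true]

theorem cycleLaplacian_mulVec_cos (hN : 3 ≤ N) (k : ℤ) :
    cycleLaplacian N *ᵥ (fun j => cos (2 * π * k * j.val / N)) =
      (2 - 2 * cos (2 * π * k / N)) • fun j => cos (2 * π * k * j.val / N) := by
  have hN0 : (N : ℝ) ≠ 0 := by positivity
  funext i
  have hsucc :
      cos (2 * π * k * (i + 1).val / N) = cos (2 * π * k * i.val / N + 2 * π * k / N) := by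
    rw [Fin.val_add, Fin.val_one', Nat.add_mod_mod, cos_two_pi_mul_natCast_mod_div]
    push_cast; ring_nf
  have hpred :
      cos (2 * π * k * (i - 1).val / N) = cos (2 * π * k * i.val / N - 2 * π * k / N) := by
    -- `(i - 1).val = (N - 1 + i) % N` lies a full period `N` (that is, `k` turns) ahead
    rw [Fin.val_sub, Fin.val_one', Nat.mod_eq_of_lt (show 1 < N by omega),
      cos_two_pi_mul_natCast_mod_div, ← cos_add_int_mul_two_pi _ (-k)]
    congr 1
    rw [Nat.cast_add, Nat.cast_sub (by omega)]
    field_simp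
    push_cast
    ring
  rw [cycleLaplacian_mulVec_apply hN, hsucc, hpred, cos_add, cos_sub, Pi.smul_apply, smul_eq_mul]
  ring
end

/-- For `N/4 < q < N/2`, the `q`-twisted state on the cycle graph is
unstable: `cos(2πq/N) < 0` and the weighted Laplacian with edge weights
`cos(2πq/N)` has a negative eigenvalue. -/
theorem twisted_state_unstable (N : ℕ) (hN : 3 ≤ N) (q : ℤ)
    (hq1 : (N : ℝ) / 4 < (q : ℝ)) (hq2 : (q : ℝ) < (N : ℝ) / 2)
    (L : Matrix (Fin N) (Fin N) ℝ)
    (hL : ∀ i j : Fin N, L i j =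
      if i = j then 2 * Real.cos (2 * Real.pi * q / N)
      else if (i.val + 1) % N = j.val ∨ (j.val + 1) % N = i.val then
        -Real.cos (2 * Real.pi * q / N)
      else 0) :
    Real.cos (2 * Real.pi * q / N) < 0 ∧
      ∃ (μ : ℝ) (x : Fin N → ℝ), x ≠ 0 ∧ μ < 0 ∧ L.mulVec x = μ • x := by
  have : NeZero N := ⟨by omega⟩
  set c := cos (2 * π * q / N)
  have hc : c < 0 := cos_two_pi_mul_div_neg hq1 hq2
  have hL' : L = c • cycleLaplacian N := by
    ext i j
    rw [hL, Matrix.smul_apply, cycleLaplacian]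
    split_ifs <;> ring
  refine ⟨hc, c * (2 - 2 * cos (2 * π * (1 : ℤ) / N)),
    fun j => cos (2 * π * (1 : ℤ) * j.val / N), fun h => by simpa using congrFun h 0, ?_, ?_⟩
  · rw [Int.cast_one, mul_one]
    exact mul_neg_of_neg_of_pos hc (by linarith [cos_two_pi_div_lt_one (N := N) (by omega)])
  · rw [hL', smul_mulVec, cycleLaplacian_mulVec_cos hN, smul_smul]
end

section
/- For the q-twisted state on the cycle graph C_N with unit weights, the eigenvalues of the Jacobian of the Kuramoto vector field at this state are λ_k = -2 cos(2πq/N)(1 - cos(2πk/N)) for k = 0, 1, ..., N-1. Consequently the q-twisted state is linearly stable (all nonzero eigenvalues negative) if and only if cos(2πq/N) > 0 (for N ≥ 3). -/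
/-!
At the twisted state the Jacobian is the circulant `c • (S + S⁻¹ - 2)` on the cycle, where
`c = cos (2πq/N)` and `S` is the cyclic shift. For every `N`-th root of unity `x`, the vector
`j ↦ x ^ j` is an eigenvector of `a + b (S + S⁻¹)` with eigenvalue `a + b (x + x⁻¹)`; for
`x = exp (2πik/N)` this is `-2c + 2c cos (2πk/N)`. As `cos (2πk/N) < 1` for `0 < k < N`, all
nonzero modes are negative exactly when `c > 0`.
-/

open Complex Real

namespace Fin

variable {N : ℕ} [NeZero N]

theorem val_add_one_mod_eq_iff_s12 (i j : Fin N) : (i.val + 1) % N = j.val ↔ i + 1 = j := by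
  rw [Fin.ext_iff, Fin.val_add, Fin.val_one', Nat.add_mod_mod]

theorem add_one_ne_self (hN : 2 ≤ N) (i : Fin N) : i + 1 ≠ i := by
  rw [Ne, add_eq_left, Fin.ext_iff, Fin.val_one', Fin.val_zero, Nat.mod_eq_of_lt (by omega)]
  exact one_ne_zero

theorem add_one_ne_sub_one (hN : 3 ≤ N) (i : Fin N) : i + 1 ≠ i - 1 := by
  have htwo : (1 + 1 : Fin N) ≠ 0 := by
    rw [Ne, Fin.ext_iff, Fin.val_add, Fin.val_one', Nat.mod_eq_of_lt (by omega : 1 < N),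
      Nat.mod_eq_of_lt (by omega : 2 < N)]
    simp
  rwa [Ne, eq_sub_iff_add_eq, add_assoc, add_eq_left]

end Fin

theorem pow_val_add_one {M : Type*} [Monoid M] {N : ℕ} [NeZero N] {x : M} (hx : x ^ N = 1)
    (j : Fin N) : x ^ (j + 1).val = x ^ j.val * x := by
  rw [Fin.val_add, Fin.val_one', Nat.add_mod_mod, ← pow_eq_pow_mod _ hx, pow_succ]

theorem pow_val_sub_one {G : Type*} [GroupWithZero G] {N : ℕ} [NeZero N] {x : G}
    (hx : x ^ N = 1) (j : Fin N) : x ^ (j - 1).val = x ^ j.val * x⁻¹ := by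
  have hx0 : x ≠ 0 := by
    rintro rfl
    exact zero_ne_one ((zero_pow (NeZero.ne N)).symm.trans hx)
  rw [eq_mul_inv_iff_mul_eq₀ hx0, ← pow_val_add_one hx, sub_add_cancel]

def cycleMatrix (N : ℕ) {R : Type*} [Zero R] (a b : R) : Matrix (Fin N) (Fin N) R :=
  fun i j => if i = j then a else if (i.val + 1) % N = j.val ∨ (j.val + 1) % N = i.val then b else 0

theorem cycleMatrix_mulVec_apply {N : ℕ} [NeZero N] (hN : 3 ≤ N) {R : Type*} [NonAssocSemiring R]
    (a b : R) (v : Fin N → R) (i : Fin N) :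
    (cycleMatrix N a b).mulVec v i = a * v i + b * v (i + 1) + b * v (i - 1) := by
  have hsucc := Fin.add_one_ne_self (by omega) i
  have hsucc_pred := Fin.add_one_ne_sub_one hN i
  have hpred : i - 1 ≠ i := by
    have := Fin.add_one_ne_self (by omega) (i - 1)
    rwa [sub_add_cancel, ne_comm] at this
  have hrow : ∀ j, cycleMatrix N a b i j =
      (if j = i then a else 0) + (if j = i + 1 then b else 0) + (if j = i - 1 then b else 0) := by
    intro j
    simp only [cycleMatrix, Fin.val_add_one_mod_eq_iff_s12, ← eq_sub_iff_add_eq (b := i)]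
    by_cases hj0 : j = i
    · subst hj0; simp [hsucc.symm, hpred.symm]
    by_cases hj1 : j = i + 1
    · subst hj1; simp only [hsucc.symm, hsucc, hsucc_pred, if_false, true_or, if_true]; simp
    by_cases hj2 : j = i - 1
    · subst hj2; simp [hpred, hpred.symm, hsucc_pred.symm]
    simp [hj0, hj1, hj2, Ne.symm hj0, Ne.symm hj1]
  simp only [Matrix.mulVec, dotProduct, hrow, add_mul, Finset.sum_add_distrib, ite_mul, zero_mul,
    Finset.sum_ite_eq', Finset.mem_univ, if_true]

theorem cycleMatrix_mulVec_pow_val {N : ℕ} [NeZero N] (hN : 3 ≤ N) {K : Type*} [Field K]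
    (a b : K) {x : K} (hx : x ^ N = 1) :
    (cycleMatrix N a b).mulVec (fun j => x ^ j.val) = fun j => (a + b * (x + x⁻¹)) * x ^ j.val := by
  funext j
  rw [cycleMatrix_mulVec_apply hN, pow_val_add_one hx, pow_val_sub_one hx]
  ring

namespace Complex

theorem exp_mul_natCast_div (z w : ℂ) (n : ℕ) : exp (z * n / w) = exp (z / w) ^ n := by
  rw [← exp_nat_mul]
  ring_nf

theorem exp_two_pi_mul_I_mul_div_pow_self (k : ℕ) {N : ℕ} (hN : N ≠ 0) :
    exp (2 * π * I * k / N) ^ N = 1 := by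
  rw [← exp_nat_mul, ← exp_nat_mul_two_pi_mul_I k]
  congr 1
  field_simp

theorem exp_mul_I_add_inv (θ : ℂ) : exp (θ * I) + (exp (θ * I))⁻¹ = 2 * cos θ := by
  rw [two_cos, ← exp_neg, neg_mul]

end Complex

theorem Real.cos_two_pi_mul_div_lt_one {k N : ℕ} (hk : k ≠ 0) (hkN : k < N) :
    Real.cos (2 * π * k / N) < 1 := by
  have hk0 : (0 : ℝ) < k := by exact_mod_cast Nat.pos_of_ne_zero hk
  have hkN' : (k : ℝ) < N := by exact_mod_cast hkN
  have hpos : 0 < 2 * π * k / N := div_pos (by positivity) (hk0.trans hkN')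
  have hlt : 2 * π * k / N < 2 * π := by
    rw [mul_div_assoc]
    exact mul_lt_of_lt_one_right (by positivity) ((div_lt_one (hk0.trans hkN')).2 hkN')
  refine (Real.cos_le_one _).lt_of_ne fun h => hpos.ne' ?_
  exact (Real.cos_eq_one_iff_of_lt_of_lt (by linarith) hlt).1 h

/-- The Jacobian of the Kuramoto field at the `q`-twisted state on
`C_N` is diagonalized by the discrete Fourier basis with eigenvalues
`λ_k = -2cos(2πq/N)(1 - cos(2πk/N))`; all nonzero-mode eigenvalues are negative
iff `cos(2πq/N) > 0`. -/
theorem twisted_state_jacobian_spectrum (N : ℕ) (hN : 3 ≤ N) (q : ℤ)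
    (J : Matrix (Fin N) (Fin N) ℝ)
    (hJ : ∀ i j : Fin N, J i j =
      if i = j then -2 * Real.cos (2 * Real.pi * q / N)
      else if (i.val + 1) % N = j.val ∨ (j.val + 1) % N = i.val then
        Real.cos (2 * Real.pi * q / N)
      else 0) :
    (∀ k : Fin N,
      (J.map (fun t : ℝ => (t : ℂ))).mulVec
          (fun j : Fin N => Complex.exp (2 * Real.pi * Complex.I * k.val * j.val / N))
        = fun j : Fin N =>
            ((-2 * Real.cos (2 * Real.pi * q / N) * (1 - Real.cos (2 * Real.pi * k.val / N)) : ℝ) : ℂ)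
              * Complex.exp (2 * Real.pi * Complex.I * k.val * j.val / N)) ∧
    ((∀ k : Fin N, k.val ≠ 0 →
        -2 * Real.cos (2 * Real.pi * q / N) * (1 - Real.cos (2 * Real.pi * k.val / N)) < 0)
      ↔ 0 < Real.cos (2 * Real.pi * q / N)) := by
  have : NeZero N := ⟨by omega⟩
  set c := Real.cos (2 * Real.pi * q / N)
  have hJC : J.map (fun t : ℝ => (t : ℂ)) = cycleMatrix N (-2 * c : ℂ) c := by
    ext i j
    rw [Matrix.map_apply, hJ, cycleMatrix]
    split_ifs <;> push_cast <;> rfl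
  refine ⟨fun k => ?_, ⟨fun hneg => ?_, fun hc k hk => ?_⟩⟩
  · simp only [hJC, exp_mul_natCast_div (2 * π * I * k.val)]
    rw [cycleMatrix_mulVec_pow_val hN _ _ (exp_two_pi_mul_I_mul_div_pow_self k (NeZero.ne N))]
    have hcos := exp_mul_I_add_inv (2 * π * k / N)
    rw [show 2 * π * k / N * I = 2 * π * I * k / N by ring] at hcos
    rw [hcos]
    funext j
    push_cast
    ring
  · have hmode1 := hneg ⟨1, by omega⟩ one_ne_zero
    have := Real.cos_two_pi_mul_div_lt_one (k := 1) one_ne_zero (by omega : 1 < N)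
    push_cast at hmode1 this
    nlinarith
  · have := Real.cos_two_pi_mul_div_lt_one hk k.isLt
    nlinarith
end

section
/- Let G be a cycle graph with n edges and positive weights γ_e. Suppose θ is a steady state with sin(θ_e) = α/γ_e for all e, where α ≥ 0, and suppose the winding sum Σ_e θ_e (with each θ_e chosen in [0, 2π)) exceeds max_e { s_-(α/γ_e) + Σ_{e' ≠ e} s_+(α/γ_{e'}) }, where s_+(x) ∈ (0, π/2) and s_-(x) ∈ (π/2, π) are the two solutions of sin t = x for x ∈ (0, 1). Then at least two edges satisfy cos(θ_e) < 0. -/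
open Real Set

/-! The angles have positive sine and lie in `[0, 2π)`, so each `θ e` lies in `(0, π)`, where
`sin` and the sign of `cos` determine the angle: `θ e = s₊` when `cos (θ e) ≥ 0` and `θ e = s₋`
otherwise. If at most one edge `e₀` had `cos (θ e₀) < 0`, the winding sum would be at most
`s₋(e₀) + ∑_{e ≠ e₀} s₊(e)`, since `s₊ < s₋`. -/

theorem eq_of_sq_eq_of_nonneg_iff {R : Type*} [CommRing R] [LinearOrder R] [IsStrictOrderedRing R]
    {a b : R} (hsq : a ^ 2 = b ^ 2) (hsign : 0 ≤ a ↔ 0 ≤ b) : a = b := by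
  rcases sq_eq_sq_iff_eq_or_eq_neg.mp hsq with h | rfl
  · exact h
  · by_cases hb : 0 ≤ b
    · linarith [hsign.mpr hb]
    · linarith [mt hsign.mp hb]

theorem Real.mem_Ioo_of_sin_pos_of_mem_Ico {t : ℝ} (ht : t ∈ Ico 0 (2 * π)) (hsin : 0 < sin t) :
    t ∈ Ioo 0 π := by
  obtain ⟨ht₀, ht₁⟩ := ht
  refine ⟨ht₀.lt_of_ne ?_, ?_⟩
  · rintro rfl
    simp at hsin
  · by_contra! hπ
    have : sin (t - 2 * π) ≤ 0 :=
      sin_nonpos_of_nonpos_of_neg_pi_le (by linarith) (by linarith)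
    rw [sin_sub_two_pi] at this
    linarith

theorem Real.eq_of_sin_eq_of_cos_nonneg_iff {s t : ℝ} (hs : s ∈ Icc 0 π) (ht : t ∈ Icc 0 π)
    (hsin : sin s = sin t) (hcos : 0 ≤ cos s ↔ 0 ≤ cos t) : s = t :=
  injOn_cos hs ht <| eq_of_sq_eq_of_nonneg_iff (by rw [cos_sq', cos_sq', hsin]) hcos

theorem Real.eq_of_sin_eq_of_cos_nonneg {s t : ℝ} (hs : s ∈ Ioo 0 (π / 2)) (ht : t ∈ Icc 0 π)
    (hsin : sin t = sin s) (hcos : 0 ≤ cos t) : t = s :=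
  eq_of_sin_eq_of_cos_nonneg_iff ht ⟨hs.1.le, by linarith [pi_pos, hs.2]⟩ hsin <|
    iff_of_true hcos (cos_pos_of_mem_Ioo ⟨by linarith [pi_pos, hs.1], hs.2⟩).le

theorem Real.eq_of_sin_eq_of_cos_neg {s t : ℝ} (hs : s ∈ Ioo (π / 2) π) (ht : t ∈ Icc 0 π)
    (hsin : sin t = sin s) (hcos : cos t < 0) : t = s :=
  eq_of_sin_eq_of_cos_nonneg_iff ht ⟨by linarith [pi_pos, hs.1], hs.2.le⟩ hsin <|
    iff_of_false hcos.not_ge (cos_neg_of_pi_div_two_lt_of_lt hs.1 (by linarith [pi_pos, hs.2])).not_ge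

theorem Finset.sum_le_add_sum_erase {ι M : Type*} [DecidableEq ι] [AddCommMonoid M] [Preorder M]
    [AddLeftMono M] {s : Finset ι} {i : ι} (hi : i ∈ s) {f g h : ι → M} (hfi : f i ≤ g i)
    (hf : ∀ j ∈ s.erase i, f j = h j) :
    ∑ j ∈ s, f j ≤ g i + ∑ j ∈ s.erase i, h j := by
  rw [← add_sum_erase s f hi, sum_congr rfl hf]
  exact add_le_add_left hfi _

theorem winding_forces_two_negative_cosines_general (n : ℕ) (hn : 0 < n)
    (γ : Fin n → ℝ)
    (α : ℝ) (hαγ : ∀ e, α / γ e ∈ Ioo (0 : ℝ) 1)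
    (sp sm : Fin n → ℝ)
    (hsp : ∀ e, sp e ∈ Ioo 0 (π / 2) ∧ Real.sin (sp e) = α / γ e)
    (hsm : ∀ e, sm e ∈ Ioo (π / 2) π ∧ Real.sin (sm e) = α / γ e)
    (θ : Fin n → ℝ)
    (hθ : ∀ e, θ e ∈ Ico (0 : ℝ) (2 * π))
    (hsin : ∀ e, Real.sin (θ e) = α / γ e)
    (hsum : ∀ e₀ : Fin n,
      sm e₀ + ∑ e' ∈ Finset.univ.erase e₀, sp e' < ∑ e : Fin n, θ e) :
    ∃ e₁ e₂ : Fin n, e₁ ≠ e₂ ∧ Real.cos (θ e₁) < 0 ∧ Real.cos (θ e₂) < 0 := by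
  have hθπ e : θ e ∈ Icc 0 π :=
    Ioo_subset_Icc_self <| mem_Ioo_of_sin_pos_of_mem_Ico (hθ e) (hsin e ▸ (hαγ e).1)
  have hθ_sp e (he : 0 ≤ cos (θ e)) : θ e = sp e :=
    eq_of_sin_eq_of_cos_nonneg (hsp e).1 (hθπ e) (by rw [hsin, (hsp e).2]) he
  have hθ_le_sm e : θ e ≤ sm e := by
    by_cases he : 0 ≤ cos (θ e)
    · linarith [hθ_sp e he, (hsp e).1.2, (hsm e).1.1]
    · exact (eq_of_sin_eq_of_cos_neg (hsm e).1 (hθπ e) (by rw [hsin, (hsm e).2])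
        (not_le.mp he)).le
  by_contra! hcon
  obtain ⟨e₀, he₀⟩ : ∃ e₀, ∀ e ≠ e₀, 0 ≤ cos (θ e) := by
    by_cases h : ∃ e, cos (θ e) < 0
    · obtain ⟨e₁, h₁⟩ := h
      exact ⟨e₁, fun e he => hcon e₁ e (Ne.symm he) h₁⟩
    · push Not at h
      exact ⟨⟨0, hn⟩, fun e _ => h e⟩
  exact (hsum e₀).not_ge <| Finset.sum_le_add_sum_erase (Finset.mem_univ e₀) (hθ_le_sm e₀)
    fun e he => hθ_sp e (he₀ e (Finset.ne_of_mem_erase he))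

/-- On a cycle graph with positive weights, if a steady state with
`sin (θ e) = α / γ e`, `θ e ∈ [0, 2π)`, has winding sum exceeding
`s₋(α/γ_e) + ∑_{e'≠e} s₊(α/γ_{e'})` for every edge `e` (where `s₊, s₋` are the two
branches of `arcsin`), then at least two edges have `cos (θ e) < 0`. -/
theorem winding_forces_two_negative_cosines (n : ℕ) (hn : 0 < n)
    (γ : Fin n → ℝ) (hγ : ∀ e, 0 < γ e)
    (α : ℝ) (hα : 0 ≤ α) (hαγ : ∀ e, α / γ e ∈ Ioo (0 : ℝ) 1)
    (sp sm : Fin n → ℝ)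
    (hsp : ∀ e, sp e ∈ Ioo 0 (π / 2) ∧ Real.sin (sp e) = α / γ e)
    (hsm : ∀ e, sm e ∈ Ioo (π / 2) π ∧ Real.sin (sm e) = α / γ e)
    (θ : Fin n → ℝ)
    (hθ : ∀ e, θ e ∈ Ico (0 : ℝ) (2 * π))
    (hsin : ∀ e, Real.sin (θ e) = α / γ e)
    (hsum : ∀ e₀ : Fin n,
      sm e₀ + ∑ e' ∈ Finset.univ.erase e₀, sp e' < ∑ e : Fin n, θ e) :
    ∃ e₁ e₂ : Fin n, e₁ ≠ e₂ ∧ Real.cos (θ e₁) < 0 ∧ Real.cos (θ e₂) < 0 :=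
  winding_forces_two_negative_cosines_general n hn γ α hαγ sp sm hsp hsm θ hθ hsin hsum
end
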